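/- arXiv:math/9907210 — 4 statements merged into one kernel-verified Lean document; each statement's English description precedes it below -/
import Mathlib

section
/- Let Ω ⊆ ℂ be open and let (ψ₁, ψ₂) be a pair of twice continuously real-differentiable complex-valued functions on Ω solving the generalized Weierstrass–Enneper system ∂ψ₁ = p ψ₂, ∂̄ψ₂ = −p ψ₁ on Ω, where p = |ψ₁|² + |ψ₂|². Then the current j = ψ̄₁ ∂ψ₂ − ψ₂ ∂ψ̄₁ satisfies ∂̄j = 0 at every point of Ω; in particular j is a holomorphic function on Ω. -/
open Complex

/-- The Wirtinger derivative ∂f = (1/2)(∂f/∂x − i ∂f/∂y) of a real-differentiable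
function `f : ℂ → ℂ`. -/
noncomputable def wD (f : ℂ → ℂ) (z : ℂ) : ℂ :=
  (1 / 2 : ℂ) * (fderiv ℝ f z 1 - Complex.I * fderiv ℝ f z Complex.I)

/-- The conjugate Wirtinger derivative ∂̄f = (1/2)(∂f/∂x + i ∂f/∂y). -/
noncomputable def wDbar (f : ℂ → ℂ) (z : ℂ) : ℂ :=
  (1 / 2 : ℂ) * (fderiv ℝ f z 1 + Complex.I * fderiv ℝ f z Complex.I)

private lemma wD_congr {f g : ℂ → ℂ} {z : ℂ} (h : f =ᶠ[nhds z] g) : wD f z = wD g z := by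
  unfold wD; rw [h.fderiv_eq]

private lemma wDbar_congr {f g : ℂ → ℂ} {z : ℂ} (h : f =ᶠ[nhds z] g) :
    wDbar f z = wDbar g z := by
  unfold wDbar; rw [h.fderiv_eq]

private lemma fderiv_conj_apply {f : ℂ → ℂ} {z : ℂ} (hf : DifferentiableAt ℝ f z) (v : ℂ) :
    fderiv ℝ (fun u => (starRingEnd ℂ) (f u)) z v = (starRingEnd ℂ) (fderiv ℝ f z v) := by
  have h : HasFDerivAt (fun u => (starRingEnd ℂ) (f u))
      ((Complex.conjCLE : ℂ →L[ℝ] ℂ).comp (fderiv ℝ f z)) z :=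
    (Complex.conjCLE.hasFDerivAt).comp z hf.hasFDerivAt
  rw [h.fderiv]; rfl

private lemma wD_conj {f : ℂ → ℂ} {z : ℂ} (hf : DifferentiableAt ℝ f z) :
    wD (fun u => (starRingEnd ℂ) (f u)) z = (starRingEnd ℂ) (wDbar f z) := by
  unfold wD wDbar
  rw [fderiv_conj_apply hf, fderiv_conj_apply hf]
  simp only [map_mul, map_add, map_sub, map_div₀, map_one, map_ofNat, Complex.conj_I]
  ring

private lemma wDbar_conj {f : ℂ → ℂ} {z : ℂ} (hf : DifferentiableAt ℝ f z) :
    wDbar (fun u => (starRingEnd ℂ) (f u)) z = (starRingEnd ℂ) (wD f z) := by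
  unfold wD wDbar
  rw [fderiv_conj_apply hf, fderiv_conj_apply hf]
  simp only [map_mul, map_add, map_sub, map_div₀, map_one, map_ofNat, Complex.conj_I]
  ring

private lemma wD_mul {f g : ℂ → ℂ} {z : ℂ} (hf : DifferentiableAt ℝ f z)
    (hg : DifferentiableAt ℝ g z) :
    wD (fun w => f w * g w) z = wD f z * g z + f z * wD g z := by
  unfold wD
  rw [fderiv_fun_mul hf hg]
  simp only [ContinuousLinearMap.add_apply, ContinuousLinearMap.smul_apply, smul_eq_mul]
  ring

private lemma wDbar_mul {f g : ℂ → ℂ} {z : ℂ} (hf : DifferentiableAt ℝ f z)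
    (hg : DifferentiableAt ℝ g z) :
    wDbar (fun w => f w * g w) z = wDbar f z * g z + f z * wDbar g z := by
  unfold wDbar
  rw [fderiv_fun_mul hf hg]
  simp only [ContinuousLinearMap.add_apply, ContinuousLinearMap.smul_apply, smul_eq_mul]
  ring

private lemma wD_add {f g : ℂ → ℂ} {z : ℂ} (hf : DifferentiableAt ℝ f z)
    (hg : DifferentiableAt ℝ g z) :
    wD (fun w => f w + g w) z = wD f z + wD g z := by
  unfold wD
  rw [fderiv_fun_add hf hg]
  simp only [ContinuousLinearMap.add_apply]
  ring

private lemma wDbar_sub {f g : ℂ → ℂ} {z : ℂ} (hf : DifferentiableAt ℝ f z)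
    (hg : DifferentiableAt ℝ g z) :
    wDbar (fun w => f w - g w) z = wDbar f z - wDbar g z := by
  unfold wDbar
  rw [fderiv_fun_sub hf hg]
  simp only [ContinuousLinearMap.sub_apply]
  ring

private lemma wD_neg {f : ℂ → ℂ} {z : ℂ} :
    wD (fun w => -f w) z = -wD f z := by
  unfold wD
  rw [fderiv_fun_neg]
  simp only [ContinuousLinearMap.neg_apply]
  ring

private lemma hasFDerivAt_wD {f : ℂ → ℂ} {z : ℂ} (hF : DifferentiableAt ℝ (fderiv ℝ f) z) :
    HasFDerivAt (wD f)
      ((1/2 : ℂ) • (((ContinuousLinearMap.apply ℝ ℂ (1:ℂ)).comp (fderiv ℝ (fderiv ℝ f) z))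
        - Complex.I • ((ContinuousLinearMap.apply ℝ ℂ Complex.I).comp
            (fderiv ℝ (fderiv ℝ f) z)))) z := by
  have h1 : HasFDerivAt (fun w => fderiv ℝ f w (1:ℂ))
      ((ContinuousLinearMap.apply ℝ ℂ (1:ℂ)).comp (fderiv ℝ (fderiv ℝ f) z)) z :=
    (ContinuousLinearMap.apply ℝ ℂ (1:ℂ)).hasFDerivAt.comp z hF.hasFDerivAt
  have h2 : HasFDerivAt (fun w => fderiv ℝ f w Complex.I)
      ((ContinuousLinearMap.apply ℝ ℂ Complex.I).comp (fderiv ℝ (fderiv ℝ f) z)) z :=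
    (ContinuousLinearMap.apply ℝ ℂ Complex.I).hasFDerivAt.comp z hF.hasFDerivAt
  exact ((h1.sub (h2.const_mul Complex.I)).const_mul ((1:ℂ)/2))

private lemma hasFDerivAt_wDbar {f : ℂ → ℂ} {z : ℂ} (hF : DifferentiableAt ℝ (fderiv ℝ f) z) :
    HasFDerivAt (wDbar f)
      ((1/2 : ℂ) • (((ContinuousLinearMap.apply ℝ ℂ (1:ℂ)).comp (fderiv ℝ (fderiv ℝ f) z))
        + Complex.I • ((ContinuousLinearMap.apply ℝ ℂ Complex.I).comp
            (fderiv ℝ (fderiv ℝ f) z)))) z := by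
  have h1 : HasFDerivAt (fun w => fderiv ℝ f w (1:ℂ))
      ((ContinuousLinearMap.apply ℝ ℂ (1:ℂ)).comp (fderiv ℝ (fderiv ℝ f) z)) z :=
    (ContinuousLinearMap.apply ℝ ℂ (1:ℂ)).hasFDerivAt.comp z hF.hasFDerivAt
  have h2 : HasFDerivAt (fun w => fderiv ℝ f w Complex.I)
      ((ContinuousLinearMap.apply ℝ ℂ Complex.I).comp (fderiv ℝ (fderiv ℝ f) z)) z :=
    (ContinuousLinearMap.apply ℝ ℂ Complex.I).hasFDerivAt.comp z hF.hasFDerivAt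
  exact ((h1.add (h2.const_mul Complex.I)).const_mul ((1:ℂ)/2))

private lemma fderiv_diffAt {f : ℂ → ℂ} {Ω : Set ℂ} (hΩ : IsOpen Ω)
    (hf : ContDiffOn ℝ 2 f Ω) {z : ℂ} (hz : z ∈ Ω) :
    DifferentiableAt ℝ (fderiv ℝ f) z :=
  ((hf.fderiv_of_isOpen hΩ (m := 1) one_add_one_eq_two.le).differentiableOn one_ne_zero).differentiableAt
    (hΩ.mem_nhds hz)

private lemma diffAt {f : ℂ → ℂ} {Ω : Set ℂ} (hΩ : IsOpen Ω)
    (hf : ContDiffOn ℝ 2 f Ω) {z : ℂ} (hz : z ∈ Ω) : DifferentiableAt ℝ f z :=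
  (hf.differentiableOn (by norm_num)).differentiableAt (hΩ.mem_nhds hz)

/-- For a C² function the mixed Wirtinger derivatives commute. -/
private lemma wDbar_wD_comm {f : ℂ → ℂ} {Ω : Set ℂ} (hΩ : IsOpen Ω)
    (hf : ContDiffOn ℝ 2 f Ω) {z : ℂ} (hz : z ∈ Ω) :
    wDbar (wD f) z = wD (wDbar f) z := by
  have hF : DifferentiableAt ℝ (fderiv ℝ f) z := fderiv_diffAt hΩ hf hz
  have hsym : IsSymmSndFDerivAt ℝ f z :=
    (hf.contDiffAt (hΩ.mem_nhds hz)).isSymmSndFDerivAt (by rw [minSmoothness_of_isRCLikeNormedField])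
  have e1 := (hasFDerivAt_wD hF).fderiv
  have e2 := (hasFDerivAt_wDbar hF).fderiv
  show (1/2 : ℂ) * (fderiv ℝ (wD f) z 1 + Complex.I * fderiv ℝ (wD f) z Complex.I)
      = (1/2 : ℂ) * (fderiv ℝ (wDbar f) z 1 - Complex.I * fderiv ℝ (wDbar f) z Complex.I)
  rw [e1, e2]
  simp only [ContinuousLinearMap.smul_apply, ContinuousLinearMap.sub_apply,
    ContinuousLinearMap.add_apply, ContinuousLinearMap.comp_apply,
    ContinuousLinearMap.apply_apply, smul_eq_mul]
  have hs := hsym.eq 1 Complex.I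
  linear_combination (-Complex.I/2 : ℂ) * hs

/-- Cauchy–Riemann: vanishing of `wDbar` plus real differentiability gives
complex differentiability. -/
private lemma diffAt_complex_of_wDbar_eq_zero {f : ℂ → ℂ} {z : ℂ}
    (hf : DifferentiableAt ℝ f z) (h : wDbar f z = 0) : DifferentiableAt ℂ f z := by
  set L := fderiv ℝ f z with hL
  have hI : L Complex.I = Complex.I * L 1 := by
    unfold wDbar at h
    rw [← hL] at h
    linear_combination (-Complex.I * 2) * h + L Complex.I * Complex.I_sq
  refine ⟨(1 : ℂ →L[ℂ] ℂ).smulRight (L 1), ?_⟩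
  have heq : L = ((1 : ℂ →L[ℂ] ℂ).smulRight (L 1)).restrictScalars ℝ := by
    apply ContinuousLinearMap.ext
    intro v
    have hv : v = v.re • (1 : ℂ) + v.im • Complex.I := by
      rw [Complex.real_smul, Complex.real_smul, mul_one]
      exact (Complex.re_add_im v).symm
    rw [hv, map_add, map_add, map_smul, map_smul, map_smul, map_smul, hI]
    simp only [ContinuousLinearMap.coe_restrictScalars',
      ContinuousLinearMap.smulRight_apply, ContinuousLinearMap.one_apply,
      Complex.real_smul, smul_eq_mul]
    ring
  exact hasFDerivAt_of_restrictScalars ℝ hf.hasFDerivAt heq.symm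

/-- for a C² solution (ψ₁, ψ₂) of the generalized Weierstrass–Enneper
system ∂ψ₁ = p ψ₂, ∂̄ψ₂ = −p ψ₁ (p = |ψ₁|² + |ψ₂|²) on an open set Ω, the current
j = ψ̄₁ ∂ψ₂ − ψ₂ ∂ψ̄₁ satisfies ∂̄j = 0 on Ω; in particular j is holomorphic on Ω. -/
theorem WE_current_is_holomorphic
    (Ω : Set ℂ) (hΩ : IsOpen Ω) (ψ₁ ψ₂ : ℂ → ℂ)
    (hψ₁ : ContDiffOn ℝ 2 ψ₁ Ω) (hψ₂ : ContDiffOn ℝ 2 ψ₂ Ω)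
    (hWE₁ : ∀ z ∈ Ω, wD ψ₁ z =
      ((Complex.normSq (ψ₁ z) + Complex.normSq (ψ₂ z) : ℝ) : ℂ) * ψ₂ z)
    (hWE₂ : ∀ z ∈ Ω, wDbar ψ₂ z =
      -((Complex.normSq (ψ₁ z) + Complex.normSq (ψ₂ z) : ℝ) : ℂ) * ψ₁ z) :
    (∀ z ∈ Ω, wDbar
        (fun w => (starRingEnd ℂ) (ψ₁ w) * wD ψ₂ w
          - ψ₂ w * wD (fun u => (starRingEnd ℂ) (ψ₁ u)) w) z = 0) ∧
      DifferentiableOn ℂ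
        (fun w => (starRingEnd ℂ) (ψ₁ w) * wD ψ₂ w
          - ψ₂ w * wD (fun u => (starRingEnd ℂ) (ψ₁ u)) w) Ω := by
  have hφ : ContDiffOn ℝ 2 (fun u => (starRingEnd ℂ) (ψ₁ u)) Ω :=
    (Complex.conjCLE : ℂ →L[ℝ] ℂ).contDiff.comp_contDiffOn hψ₁
  have hφ₂ : ContDiffOn ℝ 2 (fun u => (starRingEnd ℂ) (ψ₂ u)) Ω :=
    (Complex.conjCLE : ℂ →L[ℝ] ℂ).contDiff.comp_contDiffOn hψ₂
  have key : ∀ z ∈ Ω, wDbar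
      (fun w => (starRingEnd ℂ) (ψ₁ w) * wD ψ₂ w
        - ψ₂ w * wD (fun u => (starRingEnd ℂ) (ψ₁ u)) w) z = 0 ∧
      DifferentiableAt ℝ (fun w => (starRingEnd ℂ) (ψ₁ w) * wD ψ₂ w
        - ψ₂ w * wD (fun u => (starRingEnd ℂ) (ψ₁ u)) w) z := by
    intro z hz
    have d1 : DifferentiableAt ℝ ψ₁ z := diffAt hΩ hψ₁ hz
    have d2 : DifferentiableAt ℝ ψ₂ z := diffAt hΩ hψ₂ hz
    have dφ : DifferentiableAt ℝ (fun u => (starRingEnd ℂ) (ψ₁ u)) z := diffAt hΩ hφ hz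
    have dφ₂ : DifferentiableAt ℝ (fun u => (starRingEnd ℂ) (ψ₂ u)) z := diffAt hΩ hφ₂ hz
    have dwD2 : DifferentiableAt ℝ (wD ψ₂) z :=
      (hasFDerivAt_wD (fderiv_diffAt hΩ hψ₂ hz)).differentiableAt
    have dwDφ : DifferentiableAt ℝ (wD (fun u => (starRingEnd ℂ) (ψ₁ u))) z :=
      (hasFDerivAt_wD (fderiv_diffAt hΩ hφ hz)).differentiableAt
    have dm1 : DifferentiableAt ℝ (fun w => (starRingEnd ℂ) (ψ₁ w) * wD ψ₂ w) z :=
      dφ.mul dwD2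
    have dm2 : DifferentiableAt ℝ
        (fun w => ψ₂ w * wD (fun u => (starRingEnd ℂ) (ψ₁ u)) w) z := d2.mul dwDφ
    refine ⟨?_, dm1.sub dm2⟩
    -- pointwise identity for the real quantity p
    have hPev : ∀ w ∈ Ω,
        ((Complex.normSq (ψ₁ w) + Complex.normSq (ψ₂ w) : ℝ) : ℂ)
          = ψ₁ w * (starRingEnd ℂ) (ψ₁ w) + ψ₂ w * (starRingEnd ℂ) (ψ₂ w) := by
      intro w hw
      push_cast
      simp only [Complex.mul_conj]
    -- basic WE facts at z
    have f4 : wD ψ₁ z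
        = (ψ₁ z * (starRingEnd ℂ) (ψ₁ z) + ψ₂ z * (starRingEnd ℂ) (ψ₂ z)) * ψ₂ z := by
      rw [hWE₁ z hz, hPev z hz]
    have f2 : wDbar ψ₂ z
        = -((ψ₁ z * (starRingEnd ℂ) (ψ₁ z) + ψ₂ z * (starRingEnd ℂ) (ψ₂ z)) * ψ₁ z) := by
      rw [hWE₂ z hz, hPev z hz]; ring
    have f1 : wDbar (fun u => (starRingEnd ℂ) (ψ₁ u)) z
        = (ψ₁ z * (starRingEnd ℂ) (ψ₁ z) + ψ₂ z * (starRingEnd ℂ) (ψ₂ z))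
          * (starRingEnd ℂ) (ψ₂ z) := by
      rw [wDbar_conj d1, hWE₁ z hz, map_mul, Complex.conj_ofReal, hPev z hz]
    have f3 : wD (fun u => (starRingEnd ℂ) (ψ₂ u)) z
        = -((ψ₁ z * (starRingEnd ℂ) (ψ₁ z) + ψ₂ z * (starRingEnd ℂ) (ψ₂ z))
          * (starRingEnd ℂ) (ψ₁ z)) := by
      rw [wD_conj d2, hWE₂ z hz, map_mul, map_neg, Complex.conj_ofReal, hPev z hz]
      ring
    -- the function P and its wD at z
    have dP : DifferentiableAt ℝ (fun w => ψ₁ w * (starRingEnd ℂ) (ψ₁ w)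
        + ψ₂ w * (starRingEnd ℂ) (ψ₂ w)) z := (d1.mul dφ).add (d2.mul dφ₂)
    have fP : wD (fun w => ψ₁ w * (starRingEnd ℂ) (ψ₁ w)
          + ψ₂ w * (starRingEnd ℂ) (ψ₂ w)) z
        = (wD ψ₁ z * (starRingEnd ℂ) (ψ₁ z)
            + ψ₁ z * wD (fun u => (starRingEnd ℂ) (ψ₁ u)) z)
          + (wD ψ₂ z * (starRingEnd ℂ) (ψ₂ z)
            + ψ₂ z * wD (fun u => (starRingEnd ℂ) (ψ₂ u)) z) := by
      rw [wD_add (f := fun w => ψ₁ w * (starRingEnd ℂ) (ψ₁ w))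
        (g := fun w => ψ₂ w * (starRingEnd ℂ) (ψ₂ w)) (d1.mul dφ) (d2.mul dφ₂), wD_mul d1 dφ, wD_mul d2 dφ₂]
    -- mixed second derivatives
    have ev2 : wDbar ψ₂ =ᶠ[nhds z] fun w =>
        -((ψ₁ w * (starRingEnd ℂ) (ψ₁ w) + ψ₂ w * (starRingEnd ℂ) (ψ₂ w)) * ψ₁ w) := by
      filter_upwards [hΩ.mem_nhds hz] with w hw
      rw [hWE₂ w hw, hPev w hw]; ring
    have f5 : wDbar (wD ψ₂) z
        = -(wD (fun w => ψ₁ w * (starRingEnd ℂ) (ψ₁ w)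
              + ψ₂ w * (starRingEnd ℂ) (ψ₂ w)) z * ψ₁ z
            + (ψ₁ z * (starRingEnd ℂ) (ψ₁ z) + ψ₂ z * (starRingEnd ℂ) (ψ₂ z))
              * wD ψ₁ z) := by
      rw [wDbar_wD_comm hΩ hψ₂ hz, wD_congr ev2, wD_neg, wD_mul dP d1]
    have ev1 : wDbar (fun u => (starRingEnd ℂ) (ψ₁ u)) =ᶠ[nhds z] fun w =>
        (ψ₁ w * (starRingEnd ℂ) (ψ₁ w) + ψ₂ w * (starRingEnd ℂ) (ψ₂ w))
          * (starRingEnd ℂ) (ψ₂ w) := by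
      filter_upwards [hΩ.mem_nhds hz] with w hw
      rw [wDbar_conj (diffAt hΩ hψ₁ hw), hWE₁ w hw, map_mul, Complex.conj_ofReal,
        hPev w hw]
    have f6 : wDbar (wD (fun u => (starRingEnd ℂ) (ψ₁ u))) z
        = wD (fun w => ψ₁ w * (starRingEnd ℂ) (ψ₁ w)
              + ψ₂ w * (starRingEnd ℂ) (ψ₂ w)) z * (starRingEnd ℂ) (ψ₂ z)
          + (ψ₁ z * (starRingEnd ℂ) (ψ₁ z) + ψ₂ z * (starRingEnd ℂ) (ψ₂ z))
            * wD (fun u => (starRingEnd ℂ) (ψ₂ u)) z := by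
      rw [wDbar_wD_comm hΩ hφ hz, wD_congr ev1, wD_mul dP dφ₂]
    -- assemble
    have e0 : wDbar (fun w => (starRingEnd ℂ) (ψ₁ w) * wD ψ₂ w
          - ψ₂ w * wD (fun u => (starRingEnd ℂ) (ψ₁ u)) w) z
        = wDbar (fun w => (starRingEnd ℂ) (ψ₁ w) * wD ψ₂ w) z
          - wDbar (fun w => ψ₂ w * wD (fun u => (starRingEnd ℂ) (ψ₁ u)) w) z :=
      wDbar_sub dm1 dm2
    have e1 : wDbar (fun w => (starRingEnd ℂ) (ψ₁ w) * wD ψ₂ w) z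
        = wDbar (fun u => (starRingEnd ℂ) (ψ₁ u)) z * wD ψ₂ z
          + (starRingEnd ℂ) (ψ₁ z) * wDbar (wD ψ₂) z := wDbar_mul dφ dwD2
    have e2 : wDbar (fun w => ψ₂ w * wD (fun u => (starRingEnd ℂ) (ψ₁ u)) w) z
        = wDbar ψ₂ z * wD (fun u => (starRingEnd ℂ) (ψ₁ u)) z
          + ψ₂ z * wDbar (wD (fun u => (starRingEnd ℂ) (ψ₁ u))) z := wDbar_mul d2 dwDφ
    rw [e0, e1, e2]
    linear_combination
      wD ψ₂ z * f1 - wD (fun u => (starRingEnd ℂ) (ψ₁ u)) z * f2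
        + (starRingEnd ℂ) (ψ₁ z) * f5 - ψ₂ z * f6
        - (ψ₁ z * (starRingEnd ℂ) (ψ₁ z) + ψ₂ z * (starRingEnd ℂ) (ψ₂ z)) * fP
        - 2 * (ψ₁ z * (starRingEnd ℂ) (ψ₁ z) + ψ₂ z * (starRingEnd ℂ) (ψ₂ z))
          * ψ₂ z * f3
        - 2 * (ψ₁ z * (starRingEnd ℂ) (ψ₁ z) + ψ₂ z * (starRingEnd ℂ) (ψ₂ z))
          * (starRingEnd ℂ) (ψ₁ z) * f4
  refine ⟨fun z hz => (key z hz).1, ?_⟩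
  intro z hz
  exact (diffAt_complex_of_wDbar_eq_zero (key z hz).2 (key z hz).1).differentiableWithinAt
end

section
/- (Proposition 2, potential solutions.) Let Ω ⊆ ℂ be open, let g : Ω → ℂ be twice continuously real-differentiable, and let ψ₁, ψ₂ : Ω → ℂ be continuously real-differentiable functions that vanish nowhere on Ω and satisfy ψ₁² = ∂̄g and ψ₂² = −∂g on Ω. If g satisfies the second-order equation ∂∂̄g = 2 (|ψ₁|² + |ψ₂|²) ψ₁ ψ₂ on Ω, then (ψ₁, ψ₂) solves the generalized Weierstrass–Enneper system ∂ψ₁ = p ψ₂, ∂̄ψ₂ = −p ψ₁ on Ω, where p = |ψ₁|² + |ψ₂|². -/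
open Complex

lemma wD_congr_s3 {f₁ f₂ : ℂ → ℂ} {Ω : Set ℂ} (hΩ : IsOpen Ω) (h : ∀ w ∈ Ω, f₁ w = f₂ w)
    {z : ℂ} (hz : z ∈ Ω) : wD f₁ z = wD f₂ z := by
  have : fderiv ℝ f₁ z = fderiv ℝ f₂ z :=
    Filter.EventuallyEq.fderiv_eq (Filter.eventuallyEq_of_mem (hΩ.mem_nhds hz) h)
  simp [wD, this]

lemma wDbar_congr_s3 {f₁ f₂ : ℂ → ℂ} {Ω : Set ℂ} (hΩ : IsOpen Ω) (h : ∀ w ∈ Ω, f₁ w = f₂ w)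
    {z : ℂ} (hz : z ∈ Ω) : wDbar f₁ z = wDbar f₂ z := by
  have : fderiv ℝ f₁ z = fderiv ℝ f₂ z :=
    Filter.EventuallyEq.fderiv_eq (Filter.eventuallyEq_of_mem (hΩ.mem_nhds hz) h)
  simp [wDbar, this]

lemma fderiv_sq {f : ℂ → ℂ} {z : ℂ} (hf : DifferentiableAt ℝ f z) (v : ℂ) :
    fderiv ℝ (fun w => f w ^ 2) z v = 2 * f z * fderiv ℝ f z v := by
  have : (fun w => f w ^ 2) = fun w => f w * f w := by ext w; ring
  rw [this, fderiv_fun_mul hf hf]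
  simp [smul_eq_mul]; ring

lemma wD_sq {f : ℂ → ℂ} {z : ℂ} (hf : DifferentiableAt ℝ f z) :
    wD (fun w => f w ^ 2) z = 2 * f z * wD f z := by
  simp only [wD, fderiv_sq hf]; ring

lemma wDbar_sq {f : ℂ → ℂ} {z : ℂ} (hf : DifferentiableAt ℝ f z) :
    wDbar (fun w => f w ^ 2) z = 2 * f z * wDbar f z := by
  simp only [wDbar, fderiv_sq hf]; ring

lemma wDbar_neg {f : ℂ → ℂ} {z : ℂ} :
    wDbar (fun w => -f w) z = -wDbar f z := by
  have : fderiv ℝ (fun w => -f w) z = -fderiv ℝ f z := fderiv_neg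
  simp [wDbar, this]; ring

lemma snd_apply {g : ℂ → ℂ} {z : ℂ} (hg : ContDiffAt ℝ 2 g z) (c v : ℂ) :
    fderiv ℝ (fun w => fderiv ℝ g w c) z v = fderiv ℝ (fderiv ℝ g) z v c := by
  have hF : DifferentiableAt ℝ (fderiv ℝ g) z :=
    (hg.fderiv_right (m := 1) (by norm_num)).differentiableAt one_ne_zero
  rw [fderiv_clm_apply hF (differentiableAt_const c)]
  simp

lemma wD_wDbar_comm {g : ℂ → ℂ} {z : ℂ} (hg : ContDiffAt ℝ 2 g z) :
    wD (fun w => wDbar g w) z = wDbar (fun w => wD g w) z := by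
  have hF : DifferentiableAt ℝ (fderiv ℝ g) z :=
    (hg.fderiv_right (m := 1) (by norm_num)).differentiableAt one_ne_zero
  have hc : ∀ c : ℂ, DifferentiableAt ℝ (fun w => fderiv ℝ g w c) z := fun c =>
    hF.clm_apply (differentiableAt_const c)
  have hsymm := hg.isSymmSndFDerivAt (by simp)
  have key : ∀ v : ℂ,
      fderiv ℝ (fun w => wDbar g w) z v
        = (1/2 : ℂ) * (fderiv ℝ (fderiv ℝ g) z v 1 + Complex.I * fderiv ℝ (fderiv ℝ g) z v Complex.I) ∧
      fderiv ℝ (fun w => wD g w) z v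
        = (1/2 : ℂ) * (fderiv ℝ (fderiv ℝ g) z v 1 - Complex.I * fderiv ℝ (fderiv ℝ g) z v Complex.I) := by
    intro v
    have h1 : fderiv ℝ (fun w => fderiv ℝ g w 1 + Complex.I * fderiv ℝ g w Complex.I) z v
        = fderiv ℝ (fderiv ℝ g) z v 1 + Complex.I * fderiv ℝ (fderiv ℝ g) z v Complex.I := by
      rw [fderiv_fun_add (hc 1) ((hc Complex.I).const_mul _), fderiv_const_mul (hc Complex.I)]
      simp [snd_apply hg]
    have h2 : fderiv ℝ (fun w => fderiv ℝ g w 1 - Complex.I * fderiv ℝ g w Complex.I) z v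
        = fderiv ℝ (fderiv ℝ g) z v 1 - Complex.I * fderiv ℝ (fderiv ℝ g) z v Complex.I := by
      rw [fderiv_fun_sub (hc 1) ((hc Complex.I).const_mul _), fderiv_const_mul (hc Complex.I)]
      simp [snd_apply hg]
    constructor
    · have : (fun w => wDbar g w)
          = fun w => (1/2 : ℂ) * (fderiv ℝ g w 1 + Complex.I * fderiv ℝ g w Complex.I) := rfl
      rw [this, fderiv_const_mul ((hc 1).fun_add ((hc Complex.I).const_mul _))]
      simp [h1]
    · have : (fun w => wD g w)
          = fun w => (1/2 : ℂ) * (fderiv ℝ g w 1 - Complex.I * fderiv ℝ g w Complex.I) := rfl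
      rw [this, fderiv_const_mul ((hc 1).fun_sub ((hc Complex.I).const_mul _))]
      simp [h2]
  rw [wD, wDbar, (key 1).1, (key Complex.I).1, (key 1).2, (key Complex.I).2,
    hsymm 1 Complex.I]
  ring

/-- Proposition 2: if g is C² on the open set Ω, ψ₁, ψ₂ are nowhere-vanishing
C¹ functions with ψ₁² = ∂̄g and ψ₂² = −∂g on Ω, and g satisfies
∂∂̄g = 2(|ψ₁|² + |ψ₂|²)ψ₁ψ₂ on Ω, then (ψ₁, ψ₂) solves the Weierstrass–Enneper system. -/
theorem WE_potential_solutions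
    (Ω : Set ℂ) (hΩ : IsOpen Ω) (g ψ₁ ψ₂ : ℂ → ℂ)
    (hg : ContDiffOn ℝ 2 g Ω)
    (hψ₁ : ContDiffOn ℝ 1 ψ₁ Ω) (hψ₂ : ContDiffOn ℝ 1 ψ₂ Ω)
    (hψ₁ne : ∀ z ∈ Ω, ψ₁ z ≠ 0) (hψ₂ne : ∀ z ∈ Ω, ψ₂ z ≠ 0)
    (hpot₁ : ∀ z ∈ Ω, (ψ₁ z) ^ 2 = wDbar g z)
    (hpot₂ : ∀ z ∈ Ω, (ψ₂ z) ^ 2 = -wD g z)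
    (heq : ∀ z ∈ Ω, wD (fun w => wDbar g w) z =
      2 * ((Complex.normSq (ψ₁ z) + Complex.normSq (ψ₂ z) : ℝ) : ℂ) * ψ₁ z * ψ₂ z) :
    ∀ z ∈ Ω,
      wD ψ₁ z = ((Complex.normSq (ψ₁ z) + Complex.normSq (ψ₂ z) : ℝ) : ℂ) * ψ₂ z ∧
      wDbar ψ₂ z = -((Complex.normSq (ψ₁ z) + Complex.normSq (ψ₂ z) : ℝ) : ℂ) * ψ₁ z := by
  intro z hz
  set p : ℂ := ((Complex.normSq (ψ₁ z) + Complex.normSq (ψ₂ z) : ℝ) : ℂ) with hp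
  have hgz : ContDiffAt ℝ 2 g z := hg.contDiffAt (hΩ.mem_nhds hz)
  have d1 : DifferentiableAt ℝ ψ₁ z :=
    (hψ₁.contDiffAt (hΩ.mem_nhds hz)).differentiableAt one_ne_zero
  have d2 : DifferentiableAt ℝ ψ₂ z :=
    (hψ₂.contDiffAt (hΩ.mem_nhds hz)).differentiableAt one_ne_zero
  constructor
  · have e1 : wD (fun w => ψ₁ w ^ 2) z = wD (fun w => wDbar g w) z :=
      wD_congr_s3 hΩ (fun w hw => hpot₁ w hw) hz
    rw [wD_sq d1, heq z hz] at e1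
    have h2 : (2 : ℂ) * ψ₁ z ≠ 0 := by
      simp [hψ₁ne z hz]
    have : 2 * ψ₁ z * wD ψ₁ z = 2 * ψ₁ z * (p * ψ₂ z) := by rw [e1]; ring
    exact mul_left_cancel₀ h2 this
  · have e2 : wDbar (fun w => ψ₂ w ^ 2) z = wDbar (fun w => -wD g w) z :=
      wDbar_congr_s3 hΩ (fun w hw => hpot₂ w hw) hz
    rw [wDbar_sq d2, wDbar_neg] at e2
    have e3 : wDbar (fun w => wD g w) z = 2 * p * ψ₁ z * ψ₂ z := by
      rw [← wD_wDbar_comm hgz]; exact heq z hz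
    rw [e3] at e2
    have h2 : (2 : ℂ) * ψ₂ z ≠ 0 := by simp [hψ₂ne z hz]
    have : 2 * ψ₂ z * wDbar ψ₂ z = 2 * ψ₂ z * (-p * ψ₁ z) := by rw [e2]; ring
    exact mul_left_cancel₀ h2 this
end

section
/- (Rational instanton solutions, Section 4.) Let m = 2l + 1 be an odd positive integer. Then the functions ψ₁(z) = √m · zᵐ z̄ˡ / (1 + |z|^{2m}) and ψ₂(z) = √m · zˡ / (1 + |z|^{2m}) solve the generalized Weierstrass–Enneper system ∂ψ₁ = p ψ₂, ∂̄ψ₂ = −p ψ₁ on all of ℂ, where p = |ψ₁|² + |ψ₂|²; in fact p(z) = m |z|^{m−1} / (1 + |z|^{2m}). -/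
open Complex

/-!
Every real-linear map `ℂ → ℂ` has the form `v ↦ a v + b v̄`, and for the real
derivative of `f` the coefficients are `a = ∂f`, `b = ∂̄f`. These coefficients obey the usual
sum, product, power and quotient rules, with `∂z = 1, ∂̄z = 0, ∂z̄ = 0, ∂̄z̄ = 1`, so both
Wirtinger derivatives of `ψ₁, ψ₂` are explicit rational expressions in `z, z̄`. Writing
`D = 1 + zᵐ z̄ᵐ`, one finds `∂ψ₁ = √m m z^(m-1) z̄ˡ / D²` and `∂̄ψ₂ = -√m m z^(m+l) z̄^(m-1) / D²`,
while `|ψ₁|² + |ψ₂|² = m |z|^(2l) / D`; for `m - 1 = 2l` these match `p ψ₂` and `-p ψ₁`.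
-/

open ComplexConjugate

/-- The real derivative of `f` at `z` is `v ↦ a v + b v̄`, i.e. `∂f z = a` and `∂̄f z = b`. -/
def HasWirtingerDerivAt (f : ℂ → ℂ) (a b z : ℂ) : Prop :=
  HasFDerivAt f (a • ContinuousLinearMap.id ℝ ℂ + b • conjCLE.toContinuousLinearMap) z

namespace HasWirtingerDerivAt

variable {f g : ℂ → ℂ} {a b a' b' z : ℂ}

theorem fderiv_apply (h : HasWirtingerDerivAt f a b z) (v : ℂ) :
    fderiv ℝ f z v = a * v + b * conj v := by
  simp [h.fderiv]

theorem wD_eq (h : HasWirtingerDerivAt f a b z) : wD f z = a := by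
  rw [wD, h.fderiv_apply, h.fderiv_apply]
  simp only [conj_I, map_one]
  linear_combination (b - a) / 2 * I_sq

theorem wDbar_eq (h : HasWirtingerDerivAt f a b z) : wDbar f z = b := by
  rw [wDbar, h.fderiv_apply, h.fderiv_apply]
  simp only [conj_I, map_one]
  linear_combination (a - b) / 2 * I_sq

theorem congr_coeff (h : HasWirtingerDerivAt f a b z) (ha : a = a') (hb : b = b') :
    HasWirtingerDerivAt f a' b' z :=
  ha ▸ hb ▸ h

theorem add (hf : HasWirtingerDerivAt f a b z) (hg : HasWirtingerDerivAt g a' b' z) :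
    HasWirtingerDerivAt (fun w => f w + g w) (a + a') (b + b') z :=
  (HasFDerivAt.add hf hg).congr_fderiv (by ext v; simp; ring)

theorem mul (hf : HasWirtingerDerivAt f a b z) (hg : HasWirtingerDerivAt g a' b' z) :
    HasWirtingerDerivAt (fun w => f w * g w) (a * g z + f z * a') (b * g z + f z * b') z :=
  (HasFDerivAt.mul hf hg).congr_fderiv (by ext v; simp; ring)

theorem const_mul (c : ℂ) (hf : HasWirtingerDerivAt f a b z) :
    HasWirtingerDerivAt (fun w => c * f w) (c * a) (c * b) z :=
  (hf.const_smul c).congr_fderiv (by ext v; simp; ring)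

theorem pow (hf : HasWirtingerDerivAt f a b z) (n : ℕ) :
    HasWirtingerDerivAt (fun w => f w ^ n) (n * f z ^ (n - 1) * a) (n * f z ^ (n - 1) * b) z :=
  (HasFDerivAt.pow hf n).congr_fderiv (by ext v; simp; ring)

theorem inv (hf : HasWirtingerDerivAt f a b z) (hz : f z ≠ 0) :
    HasWirtingerDerivAt (fun w => (f w)⁻¹) (-(a / f z ^ 2)) (-(b / f z ^ 2)) z :=
  (((hasFDerivAt_inv hz).restrictScalars ℝ).comp z hf).congr_fderiv
    (by ext v; simp; field_simp)

theorem div (hf : HasWirtingerDerivAt f a b z) (hg : HasWirtingerDerivAt g a' b' z)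
    (hz : g z ≠ 0) :
    HasWirtingerDerivAt (fun w => f w / g w)
      ((a * g z - f z * a') / g z ^ 2) ((b * g z - f z * b') / g z ^ 2) z := by
  simp only [div_eq_mul_inv]
  exact (hf.mul (hg.inv hz)).congr_coeff (by field_simp; ring) (by field_simp; ring)

end HasWirtingerDerivAt

theorem hasWirtingerDerivAt_id (z : ℂ) : HasWirtingerDerivAt (fun w => w) 1 0 z :=
  (hasFDerivAt_id z).congr_fderiv (by ext v; simp)

theorem hasWirtingerDerivAt_conj (z : ℂ) : HasWirtingerDerivAt conj 0 1 z :=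
  conjCLE.hasFDerivAt.congr_fderiv (by ext v; simp)

theorem hasWirtingerDerivAt_const (c z : ℂ) : HasWirtingerDerivAt (fun _ => c) 0 0 z :=
  (hasFDerivAt_const c z).congr_fderiv (by ext v; simp)

theorem hasWirtingerDerivAt_monomial (p q : ℕ) (z : ℂ) :
    HasWirtingerDerivAt (fun w => w ^ p * conj w ^ q)
      (p * z ^ (p - 1) * conj z ^ q) (q * z ^ p * conj z ^ (q - 1)) z :=
  (((hasWirtingerDerivAt_id z).pow p).mul ((hasWirtingerDerivAt_conj z).pow q)).congr_coeff
    (by simp) (by simp; ring)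

theorem hasWirtingerDerivAt_one_add_normSq_pow (m : ℕ) (z : ℂ) :
    HasWirtingerDerivAt (fun w => 1 + (normSq w : ℂ) ^ m)
      (m * z ^ (m - 1) * conj z ^ m) (m * z ^ m * conj z ^ (m - 1)) z := by
  have h := (hasWirtingerDerivAt_const 1 z).add (hasWirtingerDerivAt_monomial m m z)
  simp only [zero_add, ← mul_pow, mul_conj] at h
  exact h

theorem one_add_normSq_pow_ne_zero (m : ℕ) (z : ℂ) : 1 + (normSq z : ℂ) ^ m ≠ 0 := by
  exact_mod_cast (add_pos_of_pos_of_nonneg one_pos (pow_nonneg (normSq_nonneg z) m)).ne'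

section RationalInstanton

variable (m l : ℕ)

noncomputable def rationalInstanton₁ (z : ℂ) : ℂ :=
  (Real.sqrt m : ℂ) * z ^ m * conj z ^ l / (1 + (normSq z : ℂ) ^ m)

noncomputable def rationalInstanton₂ (z : ℂ) : ℂ :=
  (Real.sqrt m : ℂ) * z ^ l / (1 + (normSq z : ℂ) ^ m)

theorem wD_rationalInstanton₁ (z : ℂ) :
    wD (rationalInstanton₁ m l) z =
      Real.sqrt m * m * z ^ (m - 1) * conj z ^ l / (1 + (normSq z : ℂ) ^ m) ^ 2 := by
  have h := (((hasWirtingerDerivAt_monomial m l z).const_mul (Real.sqrt m : ℂ)).div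
    (hasWirtingerDerivAt_one_add_normSq_pow m z) (one_add_normSq_pow_ne_zero m z))
  simp only [← mul_assoc] at h
  refine h.wD_eq.trans ?_
  rw [← mul_conj, mul_pow]
  ring

theorem wDbar_rationalInstanton₂ (z : ℂ) :
    wDbar (rationalInstanton₂ m l) z =
      -(Real.sqrt m * m * z ^ (m + l) * conj z ^ (m - 1) / (1 + (normSq z : ℂ) ^ m) ^ 2) := by
  have h := (((hasWirtingerDerivAt_id z).pow l).const_mul (Real.sqrt m : ℂ)).div
    (hasWirtingerDerivAt_one_add_normSq_pow m z) (one_add_normSq_pow_ne_zero m z)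
  refine h.wDbar_eq.trans ?_
  rw [← mul_conj, mul_pow]
  ring

theorem normSq_rationalInstanton₁_add_normSq_rationalInstanton₂ (z : ℂ) :
    normSq (rationalInstanton₁ m l z) + normSq (rationalInstanton₂ m l z) =
      m * normSq z ^ l / (1 + normSq z ^ m) := by
  have hD : 1 + (normSq z : ℂ) ^ m = ((1 + normSq z ^ m : ℝ) : ℂ) := by push_cast; rfl
  have hD0 : 1 + normSq z ^ m ≠ 0 := by exact_mod_cast hD ▸ one_add_normSq_pow_ne_zero m z
  simp only [rationalInstanton₁, rationalInstanton₂, hD, map_div₀, map_mul, map_pow,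
    normSq_conj, normSq_ofReal, Real.mul_self_sqrt (Nat.cast_nonneg m)]
  field_simp
  ring

end RationalInstanton

/-- rational instanton solutions: for an odd positive integer m = 2l + 1,
the functions ψ₁(z) = √m zᵐ z̄ˡ / (1 + |z|^{2m}) and ψ₂(z) = √m zˡ / (1 + |z|^{2m})
solve the Weierstrass–Enneper system on ℂ, and p(z) = m |z|^{m−1} / (1 + |z|^{2m}). -/
theorem WE_rational_instanton (m l : ℕ) (hm : m = 2 * l + 1)
    (ψ₁ ψ₂ : ℂ → ℂ)
    (hψ₁ : ψ₁ = fun z => (Real.sqrt m : ℂ) * z ^ m * ((starRingEnd ℂ) z) ^ l /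
      (1 + ((Complex.normSq z : ℝ) : ℂ) ^ m))
    (hψ₂ : ψ₂ = fun z => (Real.sqrt m : ℂ) * z ^ l /
      (1 + ((Complex.normSq z : ℝ) : ℂ) ^ m)) :
    (∀ z : ℂ, wD ψ₁ z =
      ((Complex.normSq (ψ₁ z) + Complex.normSq (ψ₂ z) : ℝ) : ℂ) * ψ₂ z) ∧
    (∀ z : ℂ, wDbar ψ₂ z =
      -((Complex.normSq (ψ₁ z) + Complex.normSq (ψ₂ z) : ℝ) : ℂ) * ψ₁ z) ∧
    (∀ z : ℂ, Complex.normSq (ψ₁ z) + Complex.normSq (ψ₂ z)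
      = m * ‖z‖ ^ (m - 1) / (1 + ‖z‖ ^ (2 * m))) := by
  obtain rfl : ψ₁ = rationalInstanton₁ m l := hψ₁
  obtain rfl : ψ₂ = rationalInstanton₂ m l := hψ₂
  simp only [normSq_rationalInstanton₁_add_normSq_rationalInstanton₂]
  subst hm
  refine ⟨fun z => ?_, fun z => ?_, fun z => ?_⟩
  · rw [wD_rationalInstanton₁, rationalInstanton₂]
    push_cast
    generalize (1 : ℂ) + (normSq z : ℂ) ^ (2 * l + 1) = D
    rw [← mul_conj]
    ring
  · rw [wDbar_rationalInstanton₂, rationalInstanton₁]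
    push_cast
    generalize (1 : ℂ) + (normSq z : ℂ) ^ (2 * l + 1) = D
    rw [← mul_conj]
    ring
  · rw [Nat.add_sub_cancel, pow_mul, pow_mul, Complex.sq_norm]
end

section
/- (Bump-type separable solution, Section 7.) Let λ, E be nonzero real numbers with λE > 0, and let D ∈ ℂ satisfy |D|² = 2λE. Then the functions ψ₁(z) = D E e^{2λz + λz̄} / (E² e^{2λ(z + z̄)} + 1) and ψ₂(z) = D e^{λz} / (E² e^{2λ(z + z̄)} + 1) solve the generalized Weierstrass–Enneper system ∂ψ₁ = p ψ₂, ∂̄ψ₂ = −p ψ₁ on all of ℂ, where p = |ψ₁|² + |ψ₂|²; in fact p(z) = 2λE e^{λ(z+z̄)} / (E² e^{2λ(z+z̄)} + 1). (Since z + z̄ = 2 Re z is real, the denominator E² e^{2λ(z+z̄)} + 1 is real and strictly positive for every z ∈ ℂ.) -/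
open Complex

noncomputable def lmap (a b : ℂ) : ℂ →L[ℝ] ℂ :=
  a • ContinuousLinearMap.id ℝ ℂ + b • (Complex.conjCLE : ℂ →L[ℝ] ℂ).toContinuousLinearMap

@[simp] lemma lmap_apply (a b v : ℂ) : lmap a b v = a * v + b * (starRingEnd ℂ) v := by
  simp [lmap, smul_eq_mul]

lemma hasFDerivAt_explin (a b c z : ℂ) :
    HasFDerivAt (fun w => c * Complex.exp (a * w + b * (starRingEnd ℂ) w))
      ((c * Complex.exp (a * z + b * (starRingEnd ℂ) z)) • lmap a b) z := by
  have hM : HasFDerivAt (fun w => a * w + b * (starRingEnd ℂ) w) (lmap a b) z := by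
    have h := (lmap a b).hasFDerivAt (x := z)
    convert h using 2
    exact (lmap_apply a b _).symm
  have hexp : HasFDerivAt Complex.exp
      (((1 : ℂ →L[ℂ] ℂ).smulRight (Complex.exp (a * z + b * (starRingEnd ℂ) z))).restrictScalars ℝ)
      (a * z + b * (starRingEnd ℂ) z) :=
    (Complex.hasDerivAt_exp _).hasFDerivAt.restrictScalars ℝ
  have := (hexp.comp z hM).const_mul c
  refine this.congr_fderiv ?_
  ext v
  simp [mul_comm, mul_assoc, mul_left_comm]

lemma wD_wDbar_quot (a1 b1 c1 a2 b2 c2 z : ℂ)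
    (hd : c2 * Complex.exp (a2 * z + b2 * (starRingEnd ℂ) z) + 1 ≠ 0) :
    wD (fun w => (c1 * Complex.exp (a1 * w + b1 * (starRingEnd ℂ) w)) *
        (c2 * Complex.exp (a2 * w + b2 * (starRingEnd ℂ) w) + 1)⁻¹) z
      = (a1 * (c1 * Complex.exp (a1 * z + b1 * (starRingEnd ℂ) z)) *
          (c2 * Complex.exp (a2 * z + b2 * (starRingEnd ℂ) z) + 1)
        - (c1 * Complex.exp (a1 * z + b1 * (starRingEnd ℂ) z)) * a2 *
          (c2 * Complex.exp (a2 * z + b2 * (starRingEnd ℂ) z))) /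
        (c2 * Complex.exp (a2 * z + b2 * (starRingEnd ℂ) z) + 1) ^ 2 ∧
    wDbar (fun w => (c1 * Complex.exp (a1 * w + b1 * (starRingEnd ℂ) w)) *
        (c2 * Complex.exp (a2 * w + b2 * (starRingEnd ℂ) w) + 1)⁻¹) z
      = (b1 * (c1 * Complex.exp (a1 * z + b1 * (starRingEnd ℂ) z)) *
          (c2 * Complex.exp (a2 * z + b2 * (starRingEnd ℂ) z) + 1)
        - (c1 * Complex.exp (a1 * z + b1 * (starRingEnd ℂ) z)) * b2 *
          (c2 * Complex.exp (a2 * z + b2 * (starRingEnd ℂ) z))) /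
        (c2 * Complex.exp (a2 * z + b2 * (starRingEnd ℂ) z) + 1) ^ 2 := by
  have hn := hasFDerivAt_explin a1 b1 c1 z
  have hden := (hasFDerivAt_explin a2 b2 c2 z).add_const 1
  have hinv : HasFDerivAt (fun w => (c2 * Complex.exp (a2 * w + b2 * (starRingEnd ℂ) w) + 1)⁻¹)
      ((((1 : ℂ →L[ℂ] ℂ).smulRight
        (-((c2 * Complex.exp (a2 * z + b2 * (starRingEnd ℂ) z) + 1) ^ 2)⁻¹)).restrictScalars ℝ).comp
        ((c2 * Complex.exp (a2 * z + b2 * (starRingEnd ℂ) z)) • lmap a2 b2)) z :=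
    ((hasFDerivAt_inv hd).restrictScalars ℝ).comp z hden
  have H := hn.mul hinv
  have hf := H.fderiv
  simp only [Pi.mul_def] at hf
  constructor
  · simp only [wD, hf, ContinuousLinearMap.add_apply, ContinuousLinearMap.smul_apply,
      ContinuousLinearMap.comp_apply, ContinuousLinearMap.coe_restrictScalars',
      ContinuousLinearMap.smulRight_apply, ContinuousLinearMap.one_apply,
      lmap_apply, smul_eq_mul, map_one, Complex.conj_I]
    field_simp
    ring_nf
    simp only [Complex.I_sq]
    ring
  · simp only [wDbar, hf, ContinuousLinearMap.add_apply, ContinuousLinearMap.smul_apply,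
      ContinuousLinearMap.comp_apply, ContinuousLinearMap.coe_restrictScalars',
      ContinuousLinearMap.smulRight_apply, ContinuousLinearMap.one_apply,
      lmap_apply, smul_eq_mul, map_one, Complex.conj_I]
    field_simp
    ring_nf
    simp only [Complex.I_sq]
    ring

/-- bump-type separable solution, Section 7: for nonzero reals λ, E with
λE > 0 and D ∈ ℂ with |D|² = 2λE, the functions
ψ₁(z) = D E e^{2λz + λz̄} / (E² e^{2λ(z + z̄)} + 1) and
ψ₂(z) = D e^{λz} / (E² e^{2λ(z + z̄)} + 1) solve the Weierstrass–Enneper system on ℂ,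
with p(z) = 2λE e^{λ(z + z̄)} / (E² e^{2λ(z + z̄)} + 1). -/
theorem WE_bump_solution (lam E : ℝ) (hlam : lam ≠ 0) (hE : E ≠ 0)
    (hlE : 0 < lam * E) (D : ℂ) (hD : Complex.normSq D = 2 * lam * E)
    (ψ₁ ψ₂ : ℂ → ℂ)
    (hψ₁ : ψ₁ = fun z => D * (E : ℂ) *
      Complex.exp (2 * (lam : ℂ) * z + (lam : ℂ) * (starRingEnd ℂ) z) /
      ((E : ℂ) ^ 2 * Complex.exp (2 * (lam : ℂ) * (z + (starRingEnd ℂ) z)) + 1))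
    (hψ₂ : ψ₂ = fun z => D * Complex.exp ((lam : ℂ) * z) /
      ((E : ℂ) ^ 2 * Complex.exp (2 * (lam : ℂ) * (z + (starRingEnd ℂ) z)) + 1)) :
    (∀ z : ℂ, wD ψ₁ z =
      ((Complex.normSq (ψ₁ z) + Complex.normSq (ψ₂ z) : ℝ) : ℂ) * ψ₂ z) ∧
    (∀ z : ℂ, wDbar ψ₂ z =
      -((Complex.normSq (ψ₁ z) + Complex.normSq (ψ₂ z) : ℝ) : ℂ) * ψ₁ z) ∧
    (∀ z : ℂ, ((Complex.normSq (ψ₁ z) + Complex.normSq (ψ₂ z) : ℝ) : ℂ)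
      = 2 * (lam : ℂ) * (E : ℂ) * Complex.exp ((lam : ℂ) * (z + (starRingEnd ℂ) z)) /
        ((E : ℂ) ^ 2 * Complex.exp (2 * (lam : ℂ) * (z + (starRingEnd ℂ) z)) + 1)) := by
  have hDD : D * (starRingEnd ℂ) D = 2 * (lam : ℂ) * (E : ℂ) := by
    rw [Complex.mul_conj, hD]; push_cast; ring
  -- denominator facts
  have harg : ∀ z : ℂ, 2 * (lam : ℂ) * (z + (starRingEnd ℂ) z) = ((4 * lam * z.re : ℝ) : ℂ) := by
    intro z; rw [Complex.add_conj]; push_cast; ring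
  have hden : ∀ z : ℂ,
      (E : ℂ) ^ 2 * Complex.exp (2 * (lam : ℂ) * (z + (starRingEnd ℂ) z)) + 1 ≠ 0 := by
    intro z
    rw [harg z, ← Complex.ofReal_exp, ← Complex.ofReal_pow, ← Complex.ofReal_mul,
      ← Complex.ofReal_one, ← Complex.ofReal_add]
    have hpos : (0 : ℝ) < E ^ 2 * Real.exp (4 * lam * z.re) + 1 := by positivity
    exact_mod_cast hpos.ne'
  -- abbreviations
  set L : ℂ := (lam : ℂ) with hL
  have hsplit1 : ∀ z : ℂ, Complex.exp (2 * L * z + L * (starRingEnd ℂ) z)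
      = Complex.exp (L * z) ^ 2 * Complex.exp (L * (starRingEnd ℂ) z) := by
    intro z
    rw [show 2 * L * z + L * (starRingEnd ℂ) z
        = (L * z + L * z) + L * (starRingEnd ℂ) z by ring, Complex.exp_add, Complex.exp_add]
    ring
  have hsplit2 : ∀ z : ℂ, Complex.exp (2 * L * (z + (starRingEnd ℂ) z))
      = Complex.exp (L * z) ^ 2 * Complex.exp (L * (starRingEnd ℂ) z) ^ 2 := by
    intro z
    rw [show 2 * L * (z + (starRingEnd ℂ) z)
        = (L * z + L * z) + (L * (starRingEnd ℂ) z + L * (starRingEnd ℂ) z) by ring,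
      Complex.exp_add, Complex.exp_add, Complex.exp_add]
    ring
  have hsplit3 : ∀ z : ℂ, Complex.exp (L * (z + (starRingEnd ℂ) z))
      = Complex.exp (L * z) * Complex.exp (L * (starRingEnd ℂ) z) := by
    intro z
    rw [show L * (z + (starRingEnd ℂ) z) = L * z + L * (starRingEnd ℂ) z by ring,
      Complex.exp_add]
  have hconjX : ∀ z : ℂ, (starRingEnd ℂ) (Complex.exp (L * z))
      = Complex.exp (L * (starRingEnd ℂ) z) := by
    intro z
    rw [← Complex.exp_conj, map_mul, hL, Complex.conj_ofReal]
  have hconjY : ∀ z : ℂ, (starRingEnd ℂ) (Complex.exp (L * (starRingEnd ℂ) z))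
      = Complex.exp (L * z) := by
    intro z
    rw [← Complex.exp_conj, map_mul, hL, Complex.conj_ofReal, Complex.conj_conj]
  have hDne : D ≠ 0 := by
    intro h
    rw [h, Complex.normSq_zero] at hD
    have : lam * E ≠ 0 := ne_of_gt hlE
    apply this
    linarith
  have hcD : (starRingEnd ℂ) D = 2 * L * (E : ℂ) / D := by
    field_simp
    linear_combination hDD
  -- rewritten denominators
  have hden2 : ∀ z : ℂ,
      (E : ℂ) ^ 2 * (Complex.exp (L * z) ^ 2 * Complex.exp (L * (starRingEnd ℂ) z) ^ 2) + 1 ≠ 0 := by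
    intro z
    have h := hden z
    rwa [hsplit2 z] at h
  -- the density function p
  have hp : ∀ z : ℂ, ((Complex.normSq (ψ₁ z) + Complex.normSq (ψ₂ z) : ℝ) : ℂ)
      = 2 * L * (E : ℂ) * Complex.exp (L * (z + (starRingEnd ℂ) z)) /
        ((E : ℂ) ^ 2 * Complex.exp (2 * L * (z + (starRingEnd ℂ) z)) + 1) := by
    intro z
    rw [Complex.ofReal_add, ← Complex.mul_conj, ← Complex.mul_conj, hψ₁, hψ₂]
    simp only
    rw [hsplit1 z, hsplit2 z, hsplit3 z]
    simp only [map_div₀, map_mul, map_add, map_pow, map_one, map_ofNat,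
      Complex.conj_ofReal, hconjX, hconjY, Complex.conj_conj]
    rw [div_mul_div_comm, div_mul_div_comm, ← add_div,
      show (E:ℂ) ^ 2 * (Complex.exp (L * (starRingEnd ℂ) z) ^ 2 * Complex.exp (L * z) ^ 2) + 1
        = (E:ℂ) ^ 2 * (Complex.exp (L * z) ^ 2 * Complex.exp (L * (starRingEnd ℂ) z) ^ 2) + 1
        from by ring,
      div_eq_div_iff (mul_ne_zero (hden2 z) (hden2 z)) (hden2 z)]
    linear_combination ((E:ℂ) ^ 2 * Complex.exp (L * z) ^ 3 * Complex.exp (L * (starRingEnd ℂ) z) ^ 3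
        + Complex.exp (L * z) * Complex.exp (L * (starRingEnd ℂ) z)) *
      ((E:ℂ) ^ 2 * (Complex.exp (L * z) ^ 2 * Complex.exp (L * (starRingEnd ℂ) z) ^ 2) + 1) * hDD
  refine ⟨?_, ?_, ?_⟩
  · intro z
    have hψ₁' : ψ₁ = fun w => (D * (E : ℂ) * Complex.exp (2 * L * w + L * (starRingEnd ℂ) w)) *
        ((E : ℂ) ^ 2 * Complex.exp (2 * L * w + 2 * L * (starRingEnd ℂ) w) + 1)⁻¹ := by
      rw [hψ₁]
      funext w
      rw [div_eq_mul_inv, show 2 * L * (w + (starRingEnd ℂ) w)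
        = 2 * L * w + 2 * L * (starRingEnd ℂ) w by ring]
    have hd : (E : ℂ) ^ 2 * Complex.exp (2 * L * z + 2 * L * (starRingEnd ℂ) z) + 1 ≠ 0 := by
      have h := hden z
      rwa [show 2 * L * (z + (starRingEnd ℂ) z)
        = 2 * L * z + 2 * L * (starRingEnd ℂ) z by ring] at h
    rw [hp z]
    conv_lhs => rw [hψ₁']
    rw [(wD_wDbar_quot (2 * L) L (D * (E : ℂ)) (2 * L) (2 * L) ((E : ℂ) ^ 2) z hd).1]
    simp only [hψ₂]
    rw [show 2 * L * z + 2 * L * (starRingEnd ℂ) z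
        = 2 * L * (z + (starRingEnd ℂ) z) by ring, hsplit1 z, hsplit2 z, hsplit3 z]
    field_simp
    ring
  · intro z
    have hψ₂' : ψ₂ = fun w => (D * Complex.exp (L * w + 0 * (starRingEnd ℂ) w)) *
        ((E : ℂ) ^ 2 * Complex.exp (2 * L * w + 2 * L * (starRingEnd ℂ) w) + 1)⁻¹ := by
      rw [hψ₂]
      funext w
      rw [div_eq_mul_inv, show L * w + 0 * (starRingEnd ℂ) w = L * w by ring,
        show 2 * L * (w + (starRingEnd ℂ) w) = 2 * L * w + 2 * L * (starRingEnd ℂ) w by ring]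
    have hd : (E : ℂ) ^ 2 * Complex.exp (2 * L * z + 2 * L * (starRingEnd ℂ) z) + 1 ≠ 0 := by
      have h := hden z
      rwa [show 2 * L * (z + (starRingEnd ℂ) z)
        = 2 * L * z + 2 * L * (starRingEnd ℂ) z by ring] at h
    rw [hp z]
    conv_lhs => rw [hψ₂']
    rw [(wD_wDbar_quot L 0 D (2 * L) (2 * L) ((E : ℂ) ^ 2) z hd).2]
    simp only [hψ₁]
    rw [show L * z + 0 * (starRingEnd ℂ) z = L * z by ring,
      show 2 * L * z + 2 * L * (starRingEnd ℂ) z = 2 * L * (z + (starRingEnd ℂ) z) by ring,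
      hsplit1 z, hsplit2 z, hsplit3 z]
    field_simp
    ring
  · exact hp
end
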